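/- arXiv:1212.3953 — 2 statements merged into one kernel-verified Lean document; each statement's English description precedes it below -/
import Mathlib

section
/- Let A be a p×p real matrix with at least one nonzero element in each row, and define the row-normalized matrix Ã with Ãᵢⱼ = aᵢⱼ² / Σₖ aᵢₖ². Then D²(A) := (1/(p−1)) inf_{C∈C} ‖CA − I_p‖² = (1/(p−1)) (p − max over permutation matrices P of tr(P Ã)). -/
open Matrix Finset

def permMat (p : ℕ) (σ : Equiv.Perm (Fin p)) : Matrix (Fin p) (Fin p) ℝ :=
  Matrix.of fun i j => if σ j = i then 1 else 0

def PJDset (p : ℕ) : Set (Matrix (Fin p) (Fin p) ℝ) :=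
  {C | ∃ (σ : Equiv.Perm (Fin p)) (J D : Fin p → ℝ),
    (∀ i, J i = 1 ∨ J i = -1) ∧ (∀ i, 0 < D i) ∧
    C = permMat p σ * Matrix.diagonal J * Matrix.diagonal D}

def frobSq {p : ℕ} (M : Matrix (Fin p) (Fin p) ℝ) : ℝ := ∑ i, ∑ j, (M i j) ^ 2

noncomputable def Dsq (p : ℕ) (A : Matrix (Fin p) (Fin p) ℝ) : ℝ :=
  (1 / ((p : ℝ) - 1)) * sInf ((fun C => frobSq (C * A - 1)) '' PJDset p)

noncomputable def Atilde {p : ℕ} (A : Matrix (Fin p) (Fin p) ℝ) : Matrix (Fin p) (Fin p) ℝ :=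
  Matrix.of fun i j => (A i j) ^ 2 / ∑ k, (A i k) ^ 2

/-!
Writing `C = P_σ · diag g` with every `g k ≠ 0`, the squared distance `‖CA - I‖²` splits into
independent row terms `g_k² S_k - 2 g_k a_{k,σ k} + 1 = S_k (g_k - a_{k,σ k}/S_k)² + 1 - a_{k,σ k}²/S_k`,
where `S_k = ∑ⱼ a_{kj}²`. Minimising row by row gives `p - tr (P_σ Ã)`, and then one maximises
over `σ`. The row minimum `g_k = a_{k,σ k}/S_k` is forbidden when `a_{k,σ k} = 0`, so the infimum
is only approached, by letting `g_k → 0` there.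
-/

open Filter Topology

lemma permMat_mul_apply {p : ℕ} (σ : Equiv.Perm (Fin p)) (B : Matrix (Fin p) (Fin p) ℝ)
    (i j : Fin p) : (permMat p σ * B) i j = B (σ.symm i) j := by
  simp only [mul_apply, permMat, of_apply]
  rw [sum_eq_single (σ.symm i)]
  · simp
  · intro k _ hk
    rw [if_neg, zero_mul]
    rintro rfl
    exact hk (σ.symm_apply_apply k).symm
  · simp

lemma trace_permMat_mul {p : ℕ} (σ : Equiv.Perm (Fin p)) (B : Matrix (Fin p) (Fin p) ℝ) :
    trace (permMat p σ * B) = ∑ k, B k (σ k) := by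
  simp only [trace, diag_apply, permMat_mul_apply]
  exact (Fintype.sum_equiv σ _ _ fun k => by simp).symm

lemma card_sub_trace_permMat_mul_Atilde {p : ℕ} (σ : Equiv.Perm (Fin p))
    (A : Matrix (Fin p) (Fin p) ℝ) :
    (p : ℝ) - trace (permMat p σ * Atilde A) = ∑ k, (1 - A k (σ k) ^ 2 / ∑ j, A k j ^ 2) := by
  rw [trace_permMat_mul, sum_sub_distrib, sum_const, card_univ, Fintype.card_fin,
    nsmul_eq_mul, mul_one]
  rfl

lemma mem_PJDset_iff {p : ℕ} {C : Matrix (Fin p) (Fin p) ℝ} :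
    C ∈ PJDset p ↔ ∃ (σ : Equiv.Perm (Fin p)) (g : Fin p → ℝ),
      (∀ k, g k ≠ 0) ∧ C = permMat p σ * diagonal g := by
  constructor
  · rintro ⟨σ, J, D, hJ, hD, rfl⟩
    refine ⟨σ, J * D, fun k => mul_ne_zero ?_ (hD k).ne', ?_⟩
    · rcases hJ k with hk | hk <;> simp [hk]
    · rw [Matrix.mul_assoc, diagonal_mul_diagonal]
      rfl
  · rintro ⟨σ, g, hg, rfl⟩
    refine ⟨σ, fun k => if 0 < g k then 1 else -1, fun k => |g k|,
      fun k => by by_cases hk : 0 < g k <;> simp [hk], fun k => abs_pos.mpr (hg k), ?_⟩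
    rw [Matrix.mul_assoc, diagonal_mul_diagonal]
    congr 2
    funext k
    by_cases hk : 0 < g k
    · simp [hk, abs_of_pos hk]
    · simp [hk, abs_of_neg (lt_of_le_of_ne (not_lt.mp hk) (hg k))]

lemma frobSq_permMat_mul_diagonal_mul_sub_one {p : ℕ} (σ : Equiv.Perm (Fin p))
    (g : Fin p → ℝ) (A : Matrix (Fin p) (Fin p) ℝ) :
    frobSq (permMat p σ * diagonal g * A - 1) =
      ∑ k, (g k ^ 2 * ∑ j, A k j ^ 2 - 2 * g k * A k (σ k) + 1) := by
  have hentry : ∀ i j, (permMat p σ * diagonal g * A) i j = g (σ.symm i) * A (σ.symm i) j := by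
    intro i j
    rw [Matrix.mul_assoc, permMat_mul_apply]
    simp [mul_apply, diagonal_apply]
  calc frobSq (permMat p σ * diagonal g * A - 1)
      = ∑ i, ∑ j, (g (σ.symm i) * A (σ.symm i) j - if i = j then 1 else 0) ^ 2 := by
        simp only [frobSq, Matrix.sub_apply, hentry, one_apply]
    _ = ∑ k, ∑ j, (g k * A k j - if σ k = j then 1 else 0) ^ 2 :=
        Fintype.sum_equiv σ.symm _ _ fun i => by simp
    _ = ∑ k, (g k ^ 2 * ∑ j, A k j ^ 2 - 2 * g k * A k (σ k) + 1) := by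
        refine sum_congr rfl fun k _ => ?_
        have expand : ∀ j, (g k * A k j - if σ k = j then 1 else 0) ^ 2
            = g k ^ 2 * A k j ^ 2 - (if σ k = j then 2 * g k * A k j else 0)
              + (if σ k = j then 1 else 0) := by
          intro j
          split <;> ring
        simp only [expand, sum_add_distrib, sum_sub_distrib, ← mul_sum, sum_ite_eq,
          mem_univ, if_true]

lemma sq_mul_sub_two_mul_add_one_eq {S : ℝ} (hS : S ≠ 0) (a g : ℝ) :
    g ^ 2 * S - 2 * g * a + 1 = S * (g - a / S) ^ 2 + (1 - a ^ 2 / S) := by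
  field_simp
  ring

lemma one_sub_sq_div_le {S : ℝ} (hS : 0 < S) (a g : ℝ) :
    1 - a ^ 2 / S ≤ g ^ 2 * S - 2 * g * a + 1 := by
  rw [sq_mul_sub_two_mul_add_one_eq hS.ne']
  exact le_add_of_nonneg_left (by positivity)

section RowScaling

variable {p : ℕ} {A : Matrix (Fin p) (Fin p) ℝ}

lemma card_sub_trace_le_frobSq (h : ∀ i, 0 < ∑ k, A i k ^ 2) (σ : Equiv.Perm (Fin p))
    (g : Fin p → ℝ) :
    (p : ℝ) - trace (permMat p σ * Atilde A) ≤ frobSq (permMat p σ * diagonal g * A - 1) := by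
  rw [card_sub_trace_permMat_mul_Atilde, frobSq_permMat_mul_diagonal_mul_sub_one]
  exact sum_le_sum fun k _ => one_sub_sq_div_le (h k) _ _

/-- `a_{k,σ k} / S_k` minimises the `k`-th row term; where it is `0`, which `PJDset` forbids,
`t` stands in. -/
noncomputable def nearOptimalScale (A : Matrix (Fin p) (Fin p) ℝ) (σ : Equiv.Perm (Fin p))
    (t : ℝ) (k : Fin p) : ℝ :=
  if A k (σ k) = 0 then t else A k (σ k) / ∑ j, A k j ^ 2

lemma nearOptimalScale_ne_zero (h : ∀ i, 0 < ∑ k, A i k ^ 2) (σ : Equiv.Perm (Fin p))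
    {t : ℝ} (ht : t ≠ 0) (k : Fin p) : nearOptimalScale A σ t k ≠ 0 := by
  unfold nearOptimalScale
  split_ifs with ha
  exacts [ht, div_ne_zero ha (h k).ne']

lemma frobSq_nearOptimalScale_le (h : ∀ i, 0 < ∑ k, A i k ^ 2) (σ : Equiv.Perm (Fin p))
    (t : ℝ) :
    frobSq (permMat p σ * diagonal (nearOptimalScale A σ t) * A - 1) ≤
      (p : ℝ) - trace (permMat p σ * Atilde A) + t ^ 2 * ∑ k, ∑ j, A k j ^ 2 := by
  rw [card_sub_trace_permMat_mul_Atilde, frobSq_permMat_mul_diagonal_mul_sub_one, mul_sum,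
    ← sum_add_distrib]
  refine sum_le_sum fun k _ => ?_
  unfold nearOptimalScale
  split_ifs with ha
  · simp [ha, add_comm]
  · rw [sq_mul_sub_two_mul_add_one_eq (h k).ne', sub_self]
    rw [sq, zero_mul, mul_zero, zero_add]
    exact le_add_of_nonneg_right (by positivity)

end RowScaling

theorem sInf_frobSq_image_PJDset {p : ℕ} {A : Matrix (Fin p) (Fin p) ℝ}
    (h : ∀ i, 0 < ∑ k, A i k ^ 2) :
    sInf ((fun C => frobSq (C * A - 1)) '' PJDset p) =
      (p : ℝ) - univ.sup' univ_nonempty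
        (fun σ : Equiv.Perm (Fin p) => trace (permMat p σ * Atilde A)) := by
  obtain ⟨σ₀, -, hσ₀⟩ := exists_mem_eq_sup' univ_nonempty
    (fun σ : Equiv.Perm (Fin p) => trace (permMat p σ * Atilde A))
  rw [hσ₀]
  have lower : ∀ x ∈ (fun C => frobSq (C * A - 1)) '' PJDset p,
      (p : ℝ) - trace (permMat p σ₀ * Atilde A) ≤ x := by
    rintro _ ⟨C, hC, rfl⟩
    obtain ⟨σ, g, -, rfl⟩ := mem_PJDset_iff.1 hC
    refine le_trans ?_ (card_sub_trace_le_frobSq h σ g)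
    exact sub_le_sub_left (hσ₀ ▸ le_sup' (fun σ => trace (permMat p σ * Atilde A)) (mem_univ σ)) _
  have witness_mem : ∀ t ≠ 0, permMat p σ₀ * diagonal (nearOptimalScale A σ₀ t) ∈ PJDset p :=
    fun t ht => mem_PJDset_iff.2 ⟨σ₀, _, nearOptimalScale_ne_zero h σ₀ ht, rfl⟩
  have upper : ∀ t ≠ 0, sInf ((fun C => frobSq (C * A - 1)) '' PJDset p) ≤
      (p : ℝ) - trace (permMat p σ₀ * Atilde A) + t ^ 2 * ∑ k, ∑ j, A k j ^ 2 :=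
    fun t ht => (csInf_le ⟨_, lower⟩ ⟨_, witness_mem t ht, rfl⟩).trans
      (frobSq_nearOptimalScale_le h σ₀ t)
  refine le_antisymm ?_ (le_csInf ⟨_, _, witness_mem 1 one_ne_zero, rfl⟩ lower)
  have hlim : Tendsto (fun t : ℝ => (p : ℝ) - trace (permMat p σ₀ * Atilde A) +
      t ^ 2 * ∑ k, ∑ j, A k j ^ 2) (𝓝[≠] 0) (𝓝 ((p : ℝ) - trace (permMat p σ₀ * Atilde A))) :=
    ((Continuous.tendsto' (by fun_prop) 0 _ (by simp))).mono_left nhdsWithin_le_nhds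
  exact ge_of_tendsto hlim (eventually_nhdsWithin_of_forall upper)

theorem stmt5_general (p : ℕ) (A : Matrix (Fin p) (Fin p) ℝ)
    (h : ∀ i, 0 < ∑ k, (A i k) ^ 2) :
    Dsq p A = (1 / ((p : ℝ) - 1)) *
      ((p : ℝ) - Finset.univ.sup' Finset.univ_nonempty
        (fun σ : Equiv.Perm (Fin p) => Matrix.trace (permMat p σ * Atilde A))) := by
  rw [Dsq, sInf_frobSq_image_PJDset h]

theorem stmt5 (p : ℕ) (hp : 2 ≤ p) (A : Matrix (Fin p) (Fin p) ℝ)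
    (h : ∀ i, 0 < ∑ k, (A i k) ^ 2) :
    Dsq p A = (1 / ((p : ℝ) - 1)) *
      ((p : ℝ) - Finset.univ.sup' Finset.univ_nonempty
        (fun σ : Equiv.Perm (Fin p) => Matrix.trace (permMat p σ * Atilde A))) :=
  stmt5_general p A h
end

section
/- For a p×p real matrix A with at least one nonzero element in each row, D²(A) = 0 if and only if A = C for some C ∈ C, i.e., if and only if A has exactly one nonzero element in each row and each column (A ~ I_p). -/
open Matrix Finset

/-!
For `C = P_σ J D`, the matrix `C A` is `A` with row `k` scaled by `J k D k` and moved to position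
`σ k`, so `‖C A - I‖²` is a sum over `k` of `‖c_k A_k - e_{σ k}‖²`. Over `c ∈ ℝ` this is at least
`‖A_k‖⁻² ∑_{l ≠ σ k} A_kl²`, hence `‖C A - I‖²` is bounded below by a quantity depending only on
`σ`. As there are finitely many `σ`, an infimum equal to zero forces this quantity to vanish for
some `σ`, that is, every row of `A` is supported on the single column `σ k`.
-/

section RowDistance

variable {ι : Type*} [Fintype ι] [DecidableEq ι]

theorem sum_erase_sq_le_sum_sq_mul (a : ι → ℝ) (m : ι) (c : ℝ) :
    ∑ l ∈ univ.erase m, a l ^ 2 ≤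
      (∑ l, a l ^ 2) * ∑ l, (c * a l - if m = l then 1 else 0) ^ 2 := by
  set R := ∑ l ∈ univ.erase m, a l ^ 2
  have hnorm : ∑ l, a l ^ 2 = a m ^ 2 + R := (add_sum_erase _ _ (mem_univ m)).symm
  have hdist : ∑ l, (c * a l - if m = l then 1 else 0) ^ 2 = (c * a m - 1) ^ 2 + c ^ 2 * R := by
    rw [← add_sum_erase _ _ (mem_univ m), if_pos rfl, mul_sum]
    congr 1
    refine sum_congr rfl fun l hl => ?_
    rw [if_neg (ne_of_mem_erase hl).symm]
    ring
  have hgap : (a m ^ 2 + R) * ((c * a m - 1) ^ 2 + c ^ 2 * R) - R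
      = (c * (a m ^ 2 + R) - a m) ^ 2 := by ring
  rw [hnorm, hdist]
  linarith [sq_nonneg (c * (a m ^ 2 + R) - a m)]

theorem sum_erase_sq_div_le (a : ι → ℝ) (m : ι) (c : ℝ) :
    (∑ l ∈ univ.erase m, a l ^ 2) / ∑ l, a l ^ 2 ≤
      ∑ l, (c * a l - if m = l then 1 else 0) ^ 2 := by
  rcases (sum_nonneg fun l _ => sq_nonneg (a l) : 0 ≤ ∑ l, a l ^ 2).eq_or_lt with h0 | hpos
  · rw [← h0, div_zero]
    exact sum_nonneg fun l _ => sq_nonneg _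
  · rw [div_le_iff₀ hpos, mul_comm]
    exact sum_erase_sq_le_sum_sq_mul a m c

theorem sum_erase_sq_div_eq_zero_iff (a : ι → ℝ) (m : ι) :
    (∑ l ∈ univ.erase m, a l ^ 2) / ∑ l, a l ^ 2 = 0 ↔ ∀ l, l ≠ m → a l = 0 := by
  have hle : ∑ l ∈ univ.erase m, a l ^ 2 ≤ ∑ l, a l ^ 2 :=
    sum_le_sum_of_subset_of_nonneg (erase_subset _ _) fun l _ _ => sq_nonneg (a l)
  have hnum : 0 ≤ ∑ l ∈ univ.erase m, a l ^ 2 := sum_nonneg fun l _ => sq_nonneg (a l)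
  rw [div_eq_zero_iff,
    or_iff_left_of_imp fun (h : ∑ l, a l ^ 2 = 0) => le_antisymm (h ▸ hle) hnum,
    sum_eq_zero_iff_of_nonneg fun l _ => sq_nonneg (a l)]
  simp only [mem_erase, mem_univ, and_true, pow_eq_zero_iff two_ne_zero]

end RowDistance

section PermDefect

variable {n : Type*} [Fintype n] [DecidableEq n]

noncomputable def permDefect (A : Matrix n n ℝ) (σ : Equiv.Perm n) : ℝ :=
  ∑ i, (∑ l ∈ univ.erase (σ i), A i l ^ 2) / ∑ l, A i l ^ 2

theorem permDefect_nonneg (A : Matrix n n ℝ) (σ : Equiv.Perm n) : 0 ≤ permDefect A σ :=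
  sum_nonneg fun _ _ => div_nonneg (sum_nonneg fun _ _ => sq_nonneg _)
    (sum_nonneg fun _ _ => sq_nonneg _)

theorem permDefect_eq_zero_iff (A : Matrix n n ℝ) (σ : Equiv.Perm n) :
    permDefect A σ = 0 ↔ ∀ i l, l ≠ σ i → A i l = 0 := by
  rw [permDefect, sum_eq_zero_iff_of_nonneg fun _ _ => div_nonneg
    (sum_nonneg fun _ _ => sq_nonneg _) (sum_nonneg fun _ _ => sq_nonneg _)]
  simp only [mem_univ, true_implies, sum_erase_sq_div_eq_zero_iff]

end PermDefect

theorem frobSq_nonneg {p : ℕ} (M : Matrix (Fin p) (Fin p) ℝ) : 0 ≤ frobSq M :=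
  sum_nonneg fun _ _ => sum_nonneg fun _ _ => sq_nonneg _

theorem permMat_mul_diagonal_mul_diagonal_apply (p : ℕ) (σ : Equiv.Perm (Fin p))
    (J D : Fin p → ℝ) (i k : Fin p) :
    (permMat p σ * diagonal J * diagonal D) i k = if σ k = i then J k * D k else 0 := by
  rw [mul_diagonal, mul_diagonal]
  simp only [permMat, of_apply]
  split <;> ring

theorem permMat_mul_diagonal_mul_diagonal_mul_apply (p : ℕ) (σ : Equiv.Perm (Fin p))
    (J D : Fin p → ℝ) (A : Matrix (Fin p) (Fin p) ℝ) (i l : Fin p) :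
    (permMat p σ * diagonal J * diagonal D * A) i l
      = J (σ.symm i) * D (σ.symm i) * A (σ.symm i) l := by
  rw [mul_apply, sum_eq_single (σ.symm i)]
  · rw [permMat_mul_diagonal_mul_diagonal_apply, if_pos (σ.apply_symm_apply i)]
  · intro k _ hk
    rw [permMat_mul_diagonal_mul_diagonal_apply, if_neg (fun h => hk (by simp [← h])), zero_mul]
  · simp

theorem permDefect_le_frobSq (p : ℕ) (A : Matrix (Fin p) (Fin p) ℝ) (σ : Equiv.Perm (Fin p))
    (J D : Fin p → ℝ) :
    permDefect A σ ≤ frobSq (permMat p σ * diagonal J * diagonal D * A - 1) := by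
  have hrows : frobSq (permMat p σ * diagonal J * diagonal D * A - 1)
      = ∑ k, ∑ l, (J k * D k * A k l - if σ k = l then 1 else 0) ^ 2 := by
    rw [frobSq, ← Equiv.sum_comp σ]
    refine sum_congr rfl fun k _ => sum_congr rfl fun l _ => ?_
    rw [Matrix.sub_apply, permMat_mul_diagonal_mul_diagonal_mul_apply, one_apply,
      σ.symm_apply_apply]
  rw [hrows]
  exact sum_le_sum fun k _ => sum_erase_sq_div_le (A k) (σ k) (J k * D k)

theorem one_mem_PJDset (p : ℕ) : (1 : Matrix (Fin p) (Fin p) ℝ) ∈ PJDset p := by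
  refine ⟨1, 1, 1, fun _ => Or.inl rfl, fun _ => one_pos, ?_⟩
  ext i k
  rw [permMat_mul_diagonal_mul_diagonal_apply, one_apply]
  simp [eq_comm]

theorem mem_PJDset_of_eq_zero_off_perm {p : ℕ} {A : Matrix (Fin p) (Fin p) ℝ}
    (σ : Equiv.Perm (Fin p)) (hdiag : ∀ i, A i (σ i) ≠ 0)
    (hoff : ∀ i l, l ≠ σ i → A i l = 0) : A ∈ PJDset p := by
  have hdiag' : ∀ k, A (σ.symm k) k ≠ 0 := fun k => by simpa using hdiag (σ.symm k)
  refine ⟨σ.symm, fun k => (SignType.sign (A (σ.symm k) k) : ℝ), fun k => |A (σ.symm k) k|,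
    fun k => ?_, fun k => abs_pos.2 (hdiag' k), ?_⟩
  · rcases (hdiag' k).lt_or_gt with hneg | hpos
    · simp [hneg]
    · simp [hpos]
  · ext i k
    rw [permMat_mul_diagonal_mul_diagonal_apply]
    split_ifs with hik
    · subst hik
      exact (sign_mul_abs _).symm
    · exact hoff i k fun h => hik (by simp [h])

theorem exists_mul_eq_one_of_mem_PJDset {p : ℕ} {C : Matrix (Fin p) (Fin p) ℝ}
    (hC : C ∈ PJDset p) : ∃ C' ∈ PJDset p, C' * C = 1 := by
  obtain ⟨σ, J, D, hJ, hD, rfl⟩ := hC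
  refine ⟨permMat p σ.symm * diagonal (fun k => J (σ.symm k))
      * diagonal (fun k => (D (σ.symm k))⁻¹),
    ⟨σ.symm, _, _, fun k => hJ (σ.symm k), fun k => inv_pos.2 (hD (σ.symm k)), rfl⟩, ?_⟩
  ext i m
  rw [permMat_mul_diagonal_mul_diagonal_mul_apply, permMat_mul_diagonal_mul_diagonal_apply,
    one_apply]
  simp only [Equiv.symm_symm, σ.symm_apply_apply, σ.injective.eq_iff]
  rcases eq_or_ne m i with rfl | him
  · have hJsq : J m * J m = 1 := by rcases hJ m with h | h <;> simp [h]
    rw [if_pos rfl, if_pos rfl]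
    field_simp [(hD m).ne']
    linear_combination hJsq
  · rw [if_neg him, if_neg him.symm, mul_zero]

theorem exists_permDefect_le_sInf {p : ℕ} (A : Matrix (Fin p) (Fin p) ℝ) :
    ∃ σ, permDefect A σ ≤ sInf ((fun C => frobSq (C * A - 1)) '' PJDset p) := by
  obtain ⟨σ, -, hσ⟩ := exists_min_image univ (permDefect A) univ_nonempty
  refine ⟨σ, le_csInf ⟨_, 1, one_mem_PJDset p, rfl⟩ ?_⟩
  rintro x ⟨C, ⟨τ, J, D, -, -, rfl⟩, rfl⟩
  exact (hσ τ (mem_univ τ)).trans (permDefect_le_frobSq p A τ J D)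

theorem Dsq_eq_zero_iff {p : ℕ} (hp : 2 ≤ p) (A : Matrix (Fin p) (Fin p) ℝ) :
    Dsq p A = 0 ↔ sInf ((fun C => frobSq (C * A - 1)) '' PJDset p) = 0 := by
  have hp' : (p : ℝ) - 1 ≠ 0 := by
    have : (2 : ℝ) ≤ p := by exact_mod_cast hp
    linarith
  rw [Dsq, mul_eq_zero, or_iff_right (one_div_ne_zero hp')]

theorem stmt10 (p : ℕ) (hp : 2 ≤ p) (A : Matrix (Fin p) (Fin p) ℝ)
    (h : ∀ i, ∃ j, A i j ≠ 0) :
    Dsq p A = 0 ↔ A ∈ PJDset p := by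
  rw [Dsq_eq_zero_iff hp]
  constructor
  · intro h0
    obtain ⟨σ, hσ⟩ := exists_permDefect_le_sInf A
    have hoff := (permDefect_eq_zero_iff A σ).1
      (le_antisymm (h0 ▸ hσ) (permDefect_nonneg A σ))
    refine mem_PJDset_of_eq_zero_off_perm σ (fun i hi => ?_) hoff
    obtain ⟨j, hj⟩ := h i
    by_cases hji : j = σ i
    · exact hj (hji ▸ hi)
    · exact hj (hoff i j hji)
  · intro hA
    obtain ⟨C, hC, hCA⟩ := exists_mul_eq_one_of_mem_PJDset hA
    refine IsLeast.csInf_eq ⟨⟨C, hC, by simp [hCA, frobSq]⟩, ?_⟩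
    rintro x ⟨C', -, rfl⟩
    exact frobSq_nonneg _
end
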